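/- Let V be a symmetric positive definite m×m matrix and R a symmetric matrix with −R nonnegative definite. Then ½ Tr(V − R V⁻¹) ≥ Tr √(−R). -/

import Mathlib

/-!
Write `V = W²` and `-R = S²` with `W = √V`, `S = √(-R)` symmetric. Then
`Tr S = Tr (W · S W⁻¹)`, and the Frobenius AM–GM inequality `2 Tr (Aᵀ B) ≤ Tr (Aᵀ A) + Tr (Bᵀ B)`
with `A = W`, `B = S W⁻¹` gives `2 Tr S ≤ Tr V + Tr (S² V⁻¹) = Tr (V - R V⁻¹)`.
-/

open Matrix

/-- The positive semidefinite square root of a positive semidefinite matrix (the definition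
that Mathlib had in December 2024, since removed). -/
noncomputable def Matrix.PosSemidef.sqrt {n : Type*} [Fintype n] [DecidableEq n]
    {A : Matrix n n ℝ} (hA : A.PosSemidef) : Matrix n n ℝ :=
  hA.1.eigenvectorUnitary.1 * diagonal ((√·) ∘ hA.1.eigenvalues) *
  (star hA.1.eigenvectorUnitary : Matrix n n ℝ)

namespace Matrix

variable {m n : Type*} [Fintype m] [Fintype n]

theorem trace_transpose_mul_le_half_add (A B : Matrix m n ℝ) :
    (Aᵀ * B).trace ≤ 1 / 2 * ((Aᵀ * A).trace + (Bᵀ * B).trace) := by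
  simp only [trace, diag, mul_apply, transpose_apply, ← Finset.sum_add_distrib, Finset.mul_sum]
  refine Finset.sum_le_sum fun i _ ↦ Finset.sum_le_sum fun j _ ↦ ?_
  nlinarith [sq_nonneg (A j i - B j i)]

variable [DecidableEq n]

theorem trace_le_half_trace_mul_self_add {W S : Matrix n n ℝ} (hW : Wᵀ = W) (hS : Sᵀ = S)
    (hdet : IsUnit W.det) :
    S.trace ≤ 1 / 2 * ((W * W).trace + (S * S * (W * W)⁻¹).trace) := by
  have hS_eq : S.trace = (Wᵀ * (S * W⁻¹)).trace := by
    rw [hW, trace_mul_comm, Matrix.mul_assoc, nonsing_inv_mul W hdet, Matrix.mul_one]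
  have hSW : ((S * W⁻¹)ᵀ * (S * W⁻¹)).trace = (S * S * (W * W)⁻¹).trace := by
    rw [transpose_mul, transpose_nonsing_inv, hW, hS, mul_inv_rev, Matrix.mul_assoc,
      trace_mul_comm]
    simp only [Matrix.mul_assoc]
  calc S.trace = (Wᵀ * (S * W⁻¹)).trace := hS_eq
    _ ≤ 1 / 2 * ((Wᵀ * W).trace + ((S * W⁻¹)ᵀ * (S * W⁻¹)).trace) :=
      trace_transpose_mul_le_half_add W (S * W⁻¹)
    _ = 1 / 2 * ((W * W).trace + (S * S * (W * W)⁻¹).trace) := by rw [hSW, hW]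

namespace PosSemidef

variable {A : Matrix n n ℝ}

theorem sqrt_mul_self (hA : A.PosSemidef) : hA.sqrt * hA.sqrt = A := by
  have hU : (star hA.1.eigenvectorUnitary : Matrix n n ℝ) * hA.1.eigenvectorUnitary.1 = 1 :=
    Unitary.star_mul_self_of_mem hA.1.eigenvectorUnitary.2
  have hdiag : diagonal ((√·) ∘ hA.1.eigenvalues) * diagonal ((√·) ∘ hA.1.eigenvalues) =
      diagonal (RCLike.ofReal ∘ hA.1.eigenvalues) := by
    simp [diagonal_mul_diagonal, Real.mul_self_sqrt (hA.eigenvalues_nonneg _)]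
  conv_rhs => rw [hA.1.spectral_theorem, Unitary.conjStarAlgAut_apply, ← hdiag]
  simp only [PosSemidef.sqrt, Matrix.mul_assoc,
    ← Matrix.mul_assoc _ (hA.1.eigenvectorUnitary : Matrix n n ℝ), hU, Matrix.one_mul]

theorem transpose_sqrt (hA : A.PosSemidef) : hA.sqrtᵀ = hA.sqrt := by
  simp [PosSemidef.sqrt, star_eq_conjTranspose, conjTranspose_eq_transpose_of_trivial,
    Matrix.mul_assoc]

end PosSemidef

end Matrix

theorem stmt14_general {m : ℕ} (V R : Matrix (Fin m) (Fin m) ℝ)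
    (hV : V.PosDef) (hR : (-R).PosSemidef) :
    hR.sqrt.trace ≤ (1 / 2) * (V - R * V⁻¹).trace := by
  have hWW : hV.posSemidef.sqrt * hV.posSemidef.sqrt = V := hV.posSemidef.sqrt_mul_self
  have hdet : IsUnit hV.posSemidef.sqrt.det := by
    have hV_det : (hV.posSemidef.sqrt * hV.posSemidef.sqrt).det ≠ 0 := by
      rw [hWW]; exact hV.det_pos.ne'
    rw [det_mul] at hV_det
    exact isUnit_iff_ne_zero.mpr (left_ne_zero_of_mul hV_det)
  have key := trace_le_half_trace_mul_self_add hV.posSemidef.transpose_sqrt hR.transpose_sqrt hdet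
  rw [hWW, hR.sqrt_mul_self] at key
  rwa [Matrix.neg_mul, trace_neg, ← sub_eq_add_neg, ← trace_sub] at key

/-- For `V` symmetric positive definite and `-R` nonnegative definite,
`½ Tr(V - R V⁻¹) ≥ Tr √(-R)`. -/
theorem stmt14 {m : ℕ} (V R : Matrix (Fin m) (Fin m) ℝ)
    (hV : V.PosDef) (hRsym : R.IsSymm) (hR : (-R).PosSemidef) :
    hR.sqrt.trace ≤ (1 / 2) * (V - R * V⁻¹).trace :=
  stmt14_general V R hV hR
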